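/- Let w ∈ S_n be a prism with a letter i ∈ supp(w) unconfined in every reduced word of w, and suppose i−1 ∉ supp(w). Then either (w(i) = i+1 and the value i occurs among w(i+1),…,w(n)), or (w(i+1) = i and w(i) ≥ i+1). (These two alternatives are the one-line-notation renderings of the two calibrated mesh patterns of the proposition.) -/

import Mathlib

/-- The adjacent transposition `σ_i`, swapping `i` and `i+1` (acting on `ℕ`). -/
def sigmaT (i : ℕ) : Equiv.Perm ℕ := Equiv.swap i (i + 1)

/-- The permutation given by a word (product of simple reflections, composed as functions). -/
def wordProd (s : List ℕ) : Equiv.Perm ℕ := (s.map sigmaT).prod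

/-- `s` is a word for `w` in `S_n`: all letters lie in `{1,…,n-1}` and the product is `w`. -/
def IsWord (n : ℕ) (w : Equiv.Perm ℕ) (s : List ℕ) : Prop :=
  (∀ j ∈ s, 1 ≤ j ∧ j ≤ n - 1) ∧ wordProd s = w

/-- `s` is a reduced word for `w`: a word of minimal length. -/
def IsReducedWord (n : ℕ) (w : Equiv.Perm ℕ) (s : List ℕ) : Prop :=
  IsWord n w s ∧ ∀ t : List ℕ, IsWord n w t → s.length ≤ t.length

/-- The Coxeter length `ℓ(w)`. -/
noncomputable def ell (n : ℕ) (w : Equiv.Perm ℕ) : ℕ :=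
  sInf {k | ∃ s : List ℕ, IsWord n w s ∧ s.length = k}

/-- The support of `w`: letters appearing in reduced words of `w`. -/
def supp (n : ℕ) (w : Equiv.Perm ℕ) : Set ℕ :=
  {i | ∃ s : List ℕ, IsReducedWord n w s ∧ i ∈ s}

/-- Bruhat order: some reduced word of `v` is a subsequence of some reduced word of `w`. -/
def BruhatLE (n : ℕ) (v w : Equiv.Perm ℕ) : Prop :=
  ∃ s t : List ℕ, IsReducedWord n v s ∧ IsReducedWord n w t ∧ s.Sublist t

/-- The principal order ideal `B(w)`, as a type. -/
def IdealB (n : ℕ) (w : Equiv.Perm ℕ) : Type := {v : Equiv.Perm ℕ // BruhatLE n v w}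

/-- The Bruhat order restricted to `B(w)`. -/
def IdealLE (n : ℕ) (w : Equiv.Perm ℕ) (a b : IdealB n w) : Prop := BruhatLE n a.1 b.1

/-- Two relations are isomorphic (order isomorphism of the corresponding ordered sets). -/
def RelIsomorphic {α β : Type*} (ra : α → α → Prop) (rb : β → β → Prop) : Prop :=
  ∃ e : α ≃ β, ∀ a b : α, ra a b ↔ rb (e a) (e b)

/-- `w` is a prism: `B(w) ≅ C₂ × X` for some partially ordered set `X`
(the two-element chain `C₂` realized as `Bool`), with the componentwise order. -/
def IsPrism (n : ℕ) (w : Equiv.Perm ℕ) : Prop :=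
  ∃ (X : Type) (rX : X → X → Prop), IsPartialOrder X rX ∧
    RelIsomorphic (IdealLE n w)
      (fun p q : Bool × X => (p.1 ≤ q.1) ∧ rX p.2 q.2)

/-- `w` belongs to `S_n`: it fixes every point outside `{1,…,n}`. -/
def MemSymm (n : ℕ) (w : Equiv.Perm ℕ) : Prop :=
  ∀ x : ℕ, x ∉ Set.Icc 1 n → w x = x

/-- `i` is unconfined in the word `s`: it appears exactly once, not between two copies
of `i+1` and not between two copies of `i-1`. -/
def Unconfined (i : ℕ) (s : List ℕ) : Prop :=
  s.count i = 1 ∧ ∀ a b : List ℕ, s = a ++ i :: b →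
    ¬((i + 1) ∈ a ∧ (i + 1) ∈ b) ∧ ¬((i - 1) ∈ a ∧ (i - 1) ∈ b)

/-- `B(w) ≅ C₂ × B(v)` with the componentwise order. -/
def IsoC2TimesIdeal (n : ℕ) (w v : Equiv.Perm ℕ) : Prop :=
  RelIsomorphic (IdealLE n w)
    (fun p q : Bool × IdealB n v => (p.1 ≤ q.1) ∧ IdealLE n v p.2 q.2)


/-!
Write a reduced word of `w` as `a · i · b`. Since `i` occurs only once and `i - 1` not at all,
the letters of `a` and `b` fix `i` and never move a value across the gap between `i` and `i + 1`.
Because `i` is unconfined, `i + 1` cannot occur on both sides. If it is absent from `b`, then `b`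
fixes `i` and `i + 1`, so `w (i + 1) = a i = i` and `w i = a (i + 1) ≥ i + 1`. If it is absent
from `a`, then `w i = a (i + 1) = i + 1`, and `x = b⁻¹ (i + 1) ≥ i + 1` has `w x = a i = i`.
-/

lemma wordProd_cons (j : ℕ) (l : List ℕ) : wordProd (j :: l) = sigmaT j * wordProd l := by
  simp [wordProd]

lemma wordProd_append_cons_apply (a b : List ℕ) (i x : ℕ) :
    wordProd (a ++ i :: b) x = wordProd a (sigmaT i (wordProd b x)) := by
  simp [wordProd]

lemma sigmaT_apply_le_iff {i j : ℕ} (hj : j ≠ i) (x : ℕ) : sigmaT j x ≤ i ↔ x ≤ i := by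
  rw [sigmaT, Equiv.swap_apply_def]
  split_ifs <;> omega

lemma wordProd_apply_le_iff {i : ℕ} {l : List ℕ} (hl : i ∉ l) (x : ℕ) :
    wordProd l x ≤ i ↔ x ≤ i := by
  induction l with
  | nil => rfl
  | cons j l ih =>
    rw [List.mem_cons, not_or] at hl
    rw [wordProd_cons, Equiv.Perm.mul_apply, sigmaT_apply_le_iff (Ne.symm hl.1), ih hl.2]

lemma wordProd_apply_eq_self {x : ℕ} {l : List ℕ} (hx : x ∉ l) (hx' : x - 1 ∉ l) :
    wordProd l x = x := by
  induction l with
  | nil => rfl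
  | cons j l ih =>
    rw [List.mem_cons, not_or] at hx hx'
    rw [wordProd_cons, Equiv.Perm.mul_apply, ih hx.2 hx'.2, sigmaT,
      Equiv.swap_apply_of_ne_of_ne hx.1 (by omega)]

section Factorization

variable {i : ℕ} {a b : List ℕ}

lemma wordProd_append_cons_of_succ_notMem_right (ha : i ∉ a) (hb : i ∉ b)
    (ha' : i - 1 ∉ a) (hb' : i - 1 ∉ b) (hb₁ : i + 1 ∉ b) :
    wordProd (a ++ i :: b) (i + 1) = i ∧ i + 1 ≤ wordProd (a ++ i :: b) i := by
  have hb_succ : wordProd b (i + 1) = i + 1 := wordProd_apply_eq_self hb₁ (by simpa using hb)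
  refine ⟨?_, ?_⟩
  · rw [wordProd_append_cons_apply, hb_succ, sigmaT, Equiv.swap_apply_right,
      wordProd_apply_eq_self ha ha']
  · rw [wordProd_append_cons_apply, wordProd_apply_eq_self hb hb', sigmaT,
      Equiv.swap_apply_left, Nat.succ_le_iff, ← not_le, wordProd_apply_le_iff ha]
    omega

lemma wordProd_append_cons_of_succ_notMem_left (ha : i ∉ a) (hb : i ∉ b)
    (ha' : i - 1 ∉ a) (hb' : i - 1 ∉ b) (ha₁ : i + 1 ∉ a) :
    wordProd (a ++ i :: b) i = i + 1 ∧ i + 1 ≤ (wordProd b)⁻¹ (i + 1) ∧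
      wordProd (a ++ i :: b) ((wordProd b)⁻¹ (i + 1)) = i := by
  have hb_inv : wordProd b ((wordProd b)⁻¹ (i + 1)) = i + 1 := by
    rw [Equiv.Perm.coe_inv, Equiv.apply_symm_apply]
  refine ⟨?_, ?_, ?_⟩
  · rw [wordProd_append_cons_apply, wordProd_apply_eq_self hb hb', sigmaT,
      Equiv.swap_apply_left, wordProd_apply_eq_self ha₁ (by simpa using ha)]
  · rw [Nat.succ_le_iff, ← not_le, ← wordProd_apply_le_iff hb, hb_inv]
    omega
  · rw [wordProd_append_cons_apply, hb_inv, sigmaT, Equiv.swap_apply_right,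
      wordProd_apply_eq_self ha ha']

end Factorization

theorem prism_incomplete_support_below_general (n : ℕ) (w : Equiv.Perm ℕ) (hw : MemSymm n w) (i : ℕ)
    (hi : i ∈ supp n w)
    (hu : ∀ s : List ℕ, IsReducedWord n w s → Unconfined i s)
    (hmiss : i - 1 ∉ supp n w) :
    (w i = i + 1 ∧ ∃ x : ℕ, i + 1 ≤ x ∧ x ≤ n ∧ w x = i) ∨
    (w (i + 1) = i ∧ i + 1 ≤ w i) := by
  obtain ⟨s, hred, hmem⟩ := hi
  obtain ⟨hcount, hsides⟩ := hu s hred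
  obtain ⟨a, b, rfl⟩ := List.append_of_mem hmem
  have hws : wordProd (a ++ i :: b) = w := hred.1.2
  obtain ⟨ha, hb⟩ : i ∉ a ∧ i ∉ b := by
    rw [List.count_append, List.count_cons_self] at hcount
    constructor <;> rw [← List.count_eq_zero] <;> omega
  obtain ⟨ha', hb'⟩ : i - 1 ∉ a ∧ i - 1 ∉ b := by
    constructor <;> intro h <;> exact hmiss ⟨_, hred, by simp [h]⟩
  by_cases hb₁ : i + 1 ∈ b
  · have ha₁ : i + 1 ∉ a := fun ha₁ => (hsides a b rfl).1 ⟨ha₁, hb₁⟩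
    obtain ⟨hwi, hx, hwx⟩ := wordProd_append_cons_of_succ_notMem_left ha hb ha' hb' ha₁
    rw [hws] at hwi hwx
    refine Or.inl ⟨hwi, _, hx, ?_, hwx⟩
    by_contra hxn
    have := hw ((wordProd b)⁻¹ (i + 1)) (by simp only [Set.mem_Icc]; omega)
    omega
  · right
    simpa [hws] using wordProd_append_cons_of_succ_notMem_right ha hb ha' hb' hb₁

/-- a prism with unconfined i and i-1 ∉ supp(w) contains one of the two
calibrated patterns (one-line-notation rendering). -/
theorem prism_incomplete_support_below (n : ℕ) (w : Equiv.Perm ℕ) (hw : MemSymm n w) (i : ℕ)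
    (hprism : IsPrism n w) (hi : i ∈ supp n w)
    (hu : ∀ s : List ℕ, IsReducedWord n w s → Unconfined i s)
    (hmiss : i - 1 ∉ supp n w) :
    (w i = i + 1 ∧ ∃ x : ℕ, i + 1 ≤ x ∧ x ≤ n ∧ w x = i) ∨
    (w (i + 1) = i ∧ i + 1 ≤ w i) :=
  prism_incomplete_support_below_general n w hw i hi hu hmiss
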